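/- (Explicit norm formula.) For x = x₀·1 + x₁e₁e₂ + x₂e₂e₃ + x₃e₁e₃ + x₄e₁ + x₅e₂ + x₆e₃ + x₇e₁e₂e₃ with x₀,…,x₇ ∈ ℝ, the octonionic norm is N(x) = x • x* = algebraMap ℝ G (x₀² + λ₁λ₂x₁² + λ₂λ₃x₂² + λ₁λ₃x₃² + λ₁x₄² + λ₂x₅² + λ₃x₆² + λ₁λ₂λ₃x₇²). -/
import Mathlib

open CliffordAlgebra

/-- The diagonal quadratic form on `ℝ³` with weights `l`. -/
noncomputable def Qf (l : Fin 3 → ℝ) : QuadraticForm ℝ (Fin 3 → ℝ) :=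
  QuadraticMap.weightedSumSquares ℝ l

/-- The octonionic product `x • y` of `x = x₊ + x₋` and `y = y₊ + y₋`, expressed in terms of
the even/odd parts: `x • y = x₊y₊ - (reverse y₋)x₋ + y₋x₊ + x₋(reverse y₊)`. -/
noncomputable def octMul {R M : Type*} [CommRing R] [AddCommGroup M] [Module R M]
    (Q : QuadraticForm R M) (xp xm yp ym : CliffordAlgebra Q) : CliffordAlgebra Q :=
  xp * yp - reverse ym * xm + ym * xp + xm * reverse yp

/-- The octonionic norm `N(x) = x • x*`, where `x* = reverse x₊ - x₋` is the full grade
inversion of `x = x₊ + x₋`. -/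
noncomputable def octNorm {R M : Type*} [CommRing R] [AddCommGroup M] [Module R M]
    (Q : QuadraticForm R M) (xp xm : CliffordAlgebra Q) : CliffordAlgebra Q :=
  octMul Q xp xm (reverse xp) (-xm)

/-- The `i`-th generator `eᵢ = ι Q (i`-th standard basis vector`)`. -/
noncomputable def genE (l : Fin 3 → ℝ) (i : Fin 3) : CliffordAlgebra (Qf l) :=
  ι (Qf l) (Pi.single i 1)

lemma genE_sq (l : Fin 3 → ℝ) (i : Fin 3) :
    genE l i * genE l i = algebraMap ℝ _ (l i) := by
  rw [genE, ι_sq_scalar]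
  congr 1
  simp [Qf, QuadraticMap.weightedSumSquares_apply, Pi.single_apply, Fin.sum_univ_three]

lemma genE_swap (l : Fin 3 → ℝ) {i j : Fin 3} (h : i ≠ j) :
    genE l j * genE l i = -(genE l i * genE l j) := by
  rw [genE, genE, ι_mul_ι_comm_of_isOrtho]
  rw [QuadraticMap.isOrtho_def]
  simp [Qf, QuadraticMap.weightedSumSquares_apply, Pi.single_apply, Fin.sum_univ_three]
  fin_cases i <;> fin_cases j <;> simp_all <;> ring

lemma reverse_genE (l : Fin 3 → ℝ) (i : Fin 3) :
    reverse (genE l i) = genE l i := reverse_ι _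

/-- (Explicit norm formula.) For
`x = x₀·1 + x₁e₁e₂ + x₂e₂e₃ + x₃e₁e₃ + x₄e₁ + x₅e₂ + x₆e₃ + x₇e₁e₂e₃`, the octonionic norm is
`N(x) = x₀² + λ₁λ₂x₁² + λ₂λ₃x₂² + λ₁λ₃x₃² + λ₁x₄² + λ₂x₅² + λ₃x₆² + λ₁λ₂λ₃x₇²`. -/
theorem octNorm_explicit (l : Fin 3 → ℝ) (hl : ∀ i, l i = 1 ∨ l i = -1)
    (x0 x1 x2 x3 x4 x5 x6 x7 : ℝ) :
    octNorm (Qf l)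
      (algebraMap ℝ (CliffordAlgebra (Qf l)) x0 + x1 • (genE l 0 * genE l 1) +
        x2 • (genE l 1 * genE l 2) + x3 • (genE l 0 * genE l 2))
      (x4 • genE l 0 + x5 • genE l 1 + x6 • genE l 2 + x7 • (genE l 0 * genE l 1 * genE l 2)) =
    algebraMap ℝ (CliffordAlgebra (Qf l))
      (x0 ^ 2 + l 0 * l 1 * x1 ^ 2 + l 1 * l 2 * x2 ^ 2 + l 0 * l 2 * x3 ^ 2 +
        l 0 * x4 ^ 2 + l 1 * x5 ^ 2 + l 2 * x6 ^ 2 + l 0 * l 1 * l 2 * x7 ^ 2) := by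
  set a := genE l 0 with ha'
  set b := genE l 1 with hb'
  set c := genE l 2 with hc'
  have haa : ∀ x, a * (a * x) = l 0 • x := fun x => by
    rw [← mul_assoc, genE_sq, Algebra.smul_def]
  have hbb : ∀ x, b * (b * x) = l 1 • x := fun x => by
    rw [← mul_assoc, genE_sq, Algebra.smul_def]
  have hcc : ∀ x, c * (c * x) = l 2 • x := fun x => by
    rw [← mul_assoc, genE_sq, Algebra.smul_def]
  have haa' : a * a = algebraMap ℝ _ (l 0) := genE_sq l 0
  have hbb' : b * b = algebraMap ℝ _ (l 1) := genE_sq l 1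
  have hcc' : c * c = algebraMap ℝ _ (l 2) := genE_sq l 2
  have hba : b * a = -(a * b) := genE_swap l (by decide)
  have hca : c * a = -(a * c) := genE_swap l (by decide)
  have hcb : c * b = -(b * c) := genE_swap l (by decide)
  have hba' : ∀ x, b * (a * x) = -(a * (b * x)) := fun x => by
    rw [← mul_assoc, hba, neg_mul, mul_assoc]
  have hca' : ∀ x, c * (a * x) = -(a * (c * x)) := fun x => by
    rw [← mul_assoc, hca, neg_mul, mul_assoc]
  have hcb' : ∀ x, c * (b * x) = -(b * (c * x)) := fun x => by
    rw [← mul_assoc, hcb, neg_mul, mul_assoc]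
  have hra : reverse a = a := reverse_genE l 0
  have hrb : reverse b = b := reverse_genE l 1
  have hrc : reverse c = c := reverse_genE l 2
  rw [octNorm, octMul]
  simp only [map_add, map_smul, map_neg, map_mul, reverse.map_mul, reverse.commutes,
    hra, hrb, hrc]
  simp only [mul_add, add_mul, neg_mul, mul_neg, neg_neg, neg_add, smul_mul_assoc,
    mul_smul_comm, smul_smul, smul_neg, mul_assoc, haa, hbb, hcc, haa', hbb', hcc',
    hba, hca, hcb, hba', hca', hcb', Algebra.algebraMap_eq_smul_one, one_mul, mul_one,
    smul_mul_assoc, mul_smul_comm, smul_smul]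
  module
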